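/- For every w in Ω = ℂ \ {it : |t| ≥ 1} with w ≠ 0, we have 0 < |(1 - √(1+w²))/w| < 1. -/

import Mathlib

open Complex

/-! The principal root `s = √(1 + w²)` lies in the right half plane, so `1` is strictly closer to
`s` than `-1` is. As `w² = -(1 - s)(1 + s)`, the norm `‖w‖` is the geometric mean of `‖1 - s‖`
and `‖1 + s‖`, hence strictly larger than `‖1 - s‖`. -/

namespace Complex

lemma one_add_sq_mem_slitPlane {w : ℂ} (hw : ∀ t : ℝ, 1 ≤ |t| → w ≠ t * I) :
    1 + w ^ 2 ∈ slitPlane := by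
  by_contra h
  obtain ⟨hre, him⟩ : (1 + w ^ 2).re ≤ 0 ∧ (1 + w ^ 2).im = 0 := by
    simpa [mem_slitPlane_iff, not_or] using h
  simp only [add_re, add_im, one_re, one_im, sq, mul_re, mul_im] at hre him
  have hw_re : w.re = 0 := by nlinarith
  refine hw w.im ?_ (ext (by simp [hw_re]) (by simp))
  rw [hw_re] at hre
  nlinarith [sq_abs w.im, abs_nonneg w.im]

lemma re_cpow_inv_two_pos {z : ℂ} (hz : z ∈ slitPlane) : 0 < (z ^ (2⁻¹ : ℂ)).re := by
  rw [cpow_inv_two_re, Real.sqrt_pos]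
  rcases mem_slitPlane_iff.1 hz with hre | him
  · linarith [norm_nonneg z]
  · linarith [neg_abs_le z.re, abs_re_lt_norm.2 him]

lemma norm_one_sub_lt_norm_one_add {s : ℂ} (hs : 0 < s.re) : ‖1 - s‖ < ‖1 + s‖ := by
  rw [← sq_lt_sq₀ (norm_nonneg _) (norm_nonneg _), Complex.sq_norm, Complex.sq_norm,
    normSq_apply, normSq_apply]
  simp only [sub_re, sub_im, add_re, add_im, one_re, one_im]
  nlinarith

lemma one_sub_ne_zero_of_sq_eq {s w : ℂ} (hw : w ^ 2 = s ^ 2 - 1) (hw0 : w ≠ 0) : 1 - s ≠ 0 :=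
  fun h ↦ hw0 <| pow_eq_zero_iff two_ne_zero |>.1 <| by rw [hw, ← sub_eq_zero.1 h]; ring

lemma norm_one_sub_lt_norm_of_sq_eq {s w : ℂ} (hs : 0 < s.re) (hw : w ^ 2 = s ^ 2 - 1)
    (hw0 : w ≠ 0) : ‖1 - s‖ < ‖w‖ := by
  have hmean : ‖w‖ ^ 2 = ‖1 - s‖ * ‖1 + s‖ := by
    rw [← norm_pow, ← norm_mul, hw, ← norm_neg]
    ring_nf
  rw [← sq_lt_sq₀ (norm_nonneg _) (norm_nonneg _), hmean, sq]
  exact mul_lt_mul_of_pos_left (norm_one_sub_lt_norm_one_add hs)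
    (norm_pos_iff.2 (one_sub_ne_zero_of_sq_eq hw hw0))

end Complex

/-- for every w ∈ Ω = ℂ \ {it : |t| ≥ 1} with w ≠ 0,
0 < |(1 - √(1+w²))/w| < 1 (principal branch square root). -/
theorem abs_psi_lt_one (w : ℂ) (hw : ∀ t : ℝ, 1 ≤ |t| → w ≠ t * I) (hw0 : w ≠ 0) :
    0 < ‖(1 - (1 + w ^ 2) ^ ((1 : ℂ) / 2)) / w‖ ∧
      ‖(1 - (1 + w ^ 2) ^ ((1 : ℂ) / 2)) / w‖ < 1 := by
  rw [one_div]
  set s := (1 + w ^ 2) ^ (2⁻¹ : ℂ)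
  have hs : 0 < s.re := re_cpow_inv_two_pos (one_add_sq_mem_slitPlane hw)
  have hsq : w ^ 2 = s ^ 2 - 1 := by simp [s]
  have hw0' : 0 < ‖w‖ := norm_pos_iff.2 hw0
  rw [norm_div]
  exact ⟨div_pos (norm_pos_iff.2 (one_sub_ne_zero_of_sq_eq hsq hw0)) hw0',
    (div_lt_one hw0').2 (norm_one_sub_lt_norm_of_sq_eq hs hsq hw0)⟩
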